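/- Let (E, ℛ, τ) satisfy conditions (i), (ii), (iii), define iteratively E_0 := E, ℛ_0 := ℛ, E_{k+1} := E(E_k, ℛ_k), ℛ_{k+1} := ℛ(E_k, ℛ_k) with the induced Γ-actions, and let Γ^(stab) be the subgroup of Γ generated by the union of the stabilizer groups Γ_e = {g ∈ Γ : τ_g(e) = e}, e ∈ E×. Then for every k ∈ ℕ and every e' ∈ E_k×, the stabilizer group Γ_{e'} = {g ∈ Γ : g·e' = e'} is contained in Γ^(stab). In particular, if Γ acts freely on E×, then Γ acts freely on E_k× for every k. -/

import Mathlib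

/-!
An element `x = e(𝒮) ≠ 0` of `E(E,ℛ)` has the form `e + s` with `s` supported strictly below `e`:
each factor `e - ⋁R` has this form, because the elements of `R ∈ ℛ(e)` lie below `e` and differ
from it (otherwise `e - ⋁R = 0`), and such elements are closed under products since `e` is
idempotent and the elements supported strictly below `e` form an ideal. Hence `e` is the largest
element of the support of `x`. If `g` fixes `x`, it permutes this support compatibly with the
order, so it fixes `e`. Descending along the tower, an element of `Γ` fixing a nonzero element of
`E_k` fixes a nonzero element of `E_0`.
-/

set_option linter.unusedSectionVars false

/-- A *semilattice with zero*: a commutative idempotent semigroup with an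
absorbing element `0`. -/
class SemilatticeWithZero (E : Type) extends CommSemigroup E, Zero E where
  mul_idem : ∀ e : E, e * e = e
  zero_mul : ∀ e : E, 0 * e = 0

namespace IndRes

variable {E : Type} [SemilatticeWithZero E]

/-- `single e c`, viewed in the semigroup algebra `ℤ[E]`. -/
noncomputable def sgl (e : E) (c : ℤ) : MonoidAlgebra ℤ E := MonoidAlgebra.ofCoeff (Finsupp.single e c)

/-- Truncation map deleting the coefficient at `0`. -/
noncomputable def T (x : MonoidAlgebra ℤ E) : MonoidAlgebra ℤ E := x - sgl 0 (x.coeff 0)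

lemma sgl_apply_self (e : E) (c : ℤ) : (sgl e c).coeff e = c := Finsupp.single_eq_same

lemma sgl_apply_ne (e d : E) (c : ℤ) (h : e ≠ d) : (sgl e c).coeff d = 0 := Finsupp.single_eq_of_ne h.symm

lemma sgl_add (e : E) (c d : ℤ) : sgl e (c + d) = sgl e c + sgl e d := congrArg MonoidAlgebra.ofCoeff (Finsupp.single_add e c d)

lemma sgl_sub (e : E) (c d : ℤ) : sgl e (c - d) = sgl e c - sgl e d := congrArg MonoidAlgebra.ofCoeff (Finsupp.single_sub e c d)

lemma T_apply_zero (x : MonoidAlgebra ℤ E) : (T x).coeff 0 = 0 := by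
  show ((x - sgl 0 (x.coeff 0) : MonoidAlgebra ℤ E)).coeff 0 = 0
  rw [MonoidAlgebra.coeff_sub, Finsupp.sub_apply, sgl_apply_self, sub_self]

/-- `ℤ[E^×]`, realized as the additive subgroup of the semigroup algebra
`ℤ[E]` consisting of the elements whose coefficient at `0` vanishes; it is the free
`ℤ`-module with basis `E^× = E \ {0}`. -/
noncomputable def ZS (E : Type) [SemilatticeWithZero E] : AddSubgroup (MonoidAlgebra ℤ E) where
  carrier := {x | x.coeff 0 = 0}
  zero_mem' := rfl
  add_mem' := by
    intro a b ha hb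
    simp only [Set.mem_setOf_eq] at *
    rw [MonoidAlgebra.coeff_add, Finsupp.add_apply, ha, hb, add_zero]
  neg_mem' := by
    intro a ha
    simp only [Set.mem_setOf_eq] at *
    rw [MonoidAlgebra.coeff_neg, Finsupp.neg_apply, ha, neg_zero]

/-- The integral semigroup ring `ℤ[E^×]`. -/
abbrev ZE (E : Type) [SemilatticeWithZero E] : Type := ↥(ZS E)

lemma mem_ZS {x : MonoidAlgebra ℤ E} : x ∈ ZS E ↔ x.coeff 0 = 0 := Iff.rfl

lemma T_eq_self {x : MonoidAlgebra ℤ E} (h : x.coeff 0 = 0) : T x = x := by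
  simp [T, h, sgl]

lemma T_add (a b : MonoidAlgebra ℤ E) : T (a + b) = T a + T b := by
  unfold T
  rw [show ((a + b).coeff 0) = a.coeff 0 + b.coeff 0 from Finsupp.add_apply a.coeff b.coeff 0, sgl_add]
  abel

lemma T_sub_sgl (x : MonoidAlgebra ℤ E) (m : ℤ) : T (x - sgl 0 m) = T x := by
  unfold T
  have h : ((x - sgl 0 m : MonoidAlgebra ℤ E)).coeff 0 = x.coeff 0 - m := by
    rw [MonoidAlgebra.coeff_sub, Finsupp.sub_apply, sgl_apply_self]
  rw [h, sgl_sub]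
  abel

lemma single_zero_mul (c : ℤ) (b : MonoidAlgebra ℤ E) :
    (sgl 0 c) * b = sgl 0 (((sgl 0 c * b : MonoidAlgebra ℤ E)).coeff 0) := by
  classical
  ext d
  by_cases hd : d = 0
  · subst hd; rw [sgl_apply_self]
  · rw [sgl_apply_ne 0 d _ (Ne.symm hd)]
    by_contra h
    have hmem : d ∈ ((sgl (0:E) c) * b).coeff.support := Finsupp.mem_support_iff.mpr h
    have h2 := MonoidAlgebra.support_coeff_mul_subset (sgl (0:E) c) b hmem
    rw [Finset.mem_mul] at h2
    obtain ⟨a, ha, b', _, hab⟩ := h2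
    have ha' : a = 0 := by
      have := Finsupp.support_single_subset (ha : a ∈ (Finsupp.single (0:E) c).support)
      simpa using this
    exact hd (by rw [← hab, ha', SemilatticeWithZero.zero_mul])

lemma T_mul_left (a b : MonoidAlgebra ℤ E) : T (T a * b) = T (a * b) := by
  have h1 : T a * b = a * b - (sgl 0 (a.coeff 0)) * b := by rw [T, sub_mul]
  rw [h1, single_zero_mul, T_sub_sgl]

lemma T_mul_right (a b : MonoidAlgebra ℤ E) : T (a * T b) = T (a * b) := by
  rw [mul_comm a (T b), T_mul_left, mul_comm]

noncomputable instance : Mul (ZE E) :=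
  ⟨fun x y => ⟨T (x.1 * y.1), T_apply_zero _⟩⟩

lemma ZE.val_mul (x y : ZE E) : (x * y).1 = T (x.1 * y.1) := rfl

noncomputable instance : NonUnitalCommRing (ZE E) :=
  { (inferInstance : AddCommGroup (ZE E)) with
    mul := (· * ·)
    left_distrib := by
      intro x y z
      apply Subtype.ext
      show T (x.1 * (y.1 + z.1)) = T (x.1 * y.1) + T (x.1 * z.1)
      rw [mul_add, T_add]
    right_distrib := by
      intro x y z
      apply Subtype.ext
      show T ((x.1 + y.1) * z.1) = T (x.1 * z.1) + T (y.1 * z.1)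
      rw [add_mul, T_add]
    zero_mul := by
      intro x
      apply Subtype.ext
      show T ((0 : MonoidAlgebra ℤ E) * x.1) = 0
      rw [zero_mul]
      simp [T, sgl]
    mul_zero := by
      intro x
      apply Subtype.ext
      show T (x.1 * (0 : MonoidAlgebra ℤ E)) = 0
      rw [mul_zero]
      simp [T, sgl]
    mul_assoc := by
      intro x y z
      apply Subtype.ext
      show T (T (x.1 * y.1) * z.1) = T (x.1 * T (y.1 * z.1))
      rw [T_mul_left, T_mul_right, mul_assoc]
    mul_comm := by
      intro x y
      apply Subtype.ext
      show T (x.1 * y.1) = T (y.1 * x.1)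
      rw [mul_comm] }

/-- The canonical image of `e ∈ E` in `ℤ[E^×]`: the basis element `e` if `e ≠ 0`,
and `0` if `e = 0`. -/
noncomputable def elt (e : E) : ZE E := ⟨T (sgl e 1), T_apply_zero _⟩

/-- Product of a (nonempty) finite family in a commutative non-unital ring, computed inside
the unitization.  For a nonempty index set this is the iterated product. -/
noncomputable def nprod {ι A : Type} [NonUnitalCommRing A] (s : Finset ι) (f : ι → A) : A :=
  (∏ j ∈ s, (Unitization.inr (f j) : Unitization ℤ A)).snd

/-- The join `⋁_{j ∈ J} x_j = ∑_{∅ ≠ J' ⊆ J} (-1)^{|J'|+1} ∏_{j ∈ J'} x_j`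
of a finite family of idempotents of a commutative non-unital ring. -/
noncomputable def rjoin {ι A : Type} [NonUnitalCommRing A] (s : Finset ι) (f : ι → A) : A :=
  ∑ t ∈ s.powerset.filter (fun t => t.Nonempty), ((-1 : ℤ) ^ (t.card + 1)) • nprod t f

/-- The join `⋁_{j ∈ J} e_j ∈ ℤ[E^×]` of a finite family of elements of `E`:
`∑_{∅ ≠ J' ⊆ J} (-1)^{|J'|+1} ∏_{j ∈ J'} e_j`, where a product whose value in `E`
is `0` contributes `0`. -/
noncomputable def join {ι : Type} (s : Finset ι) (e : ι → E) : ZE E :=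
  rjoin s (fun j => elt (e j))

/-- Iterated product of a nonempty list in a semigroup with zero (the value on the
empty list is the junk value `0`). -/
def listProd : List E → E
  | [] => 0
  | [a] => a
  | a :: b :: l => a * listProd (b :: l)

/-- The product `∏_{j ∈ s} f j ∈ E` of a (nonempty) finite family. -/
noncomputable def eprod {ι : Type} (s : Finset ι) (f : ι → E) : E :=
  listProd (s.toList.map f)

/-- The support `E(x)` of `x ∈ ℤ[E^×]`: the finite set of elements of `E^×` appearing
with a nonzero coefficient in the reduced form of `x`. -/
noncomputable def supp (x : ZE E) : Finset E := x.1.coeff.support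

section Action

variable {Γ : Type} [Group Γ] [MulAction Γ E]

/-- The induced action of `g ∈ Γ` on `ℤ[E^×]`: the `ℤ`-linear map sending a basis
element `e ∈ E^×` to `g • e`.  (When the action fixes `0` — which is the case for an
action by semigroup automorphisms fixing `0` — the truncation `T` is a no-op, and this
is the automorphism of `ℤ[E^×]` induced by `τ_g`.) -/
noncomputable def act (g : Γ) (x : ZE E) : ZE E :=
  ⟨T (MonoidAlgebra.ofCoeff (Finsupp.mapDomain (fun e : E => g • e) x.1.coeff)), T_apply_zero _⟩

end Action



attribute [local instance] Classical.propDecidable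

variable {E : Type} [SemilatticeWithZero E]

/-- A Γ-semilattice structure: the group acts by semigroup automorphisms fixing `0`. -/
def IsGammaSL (Γ E : Type) [Group Γ] [SemilatticeWithZero E] [MulAction Γ E] : Prop :=
  (∀ (g : Γ) (x y : E), g • (x * y) = (g • x) * (g • y)) ∧ (∀ g : Γ, g • (0 : E) = 0)

/-- The set `E_φ`. -/
def Ephi {D : Type} [NonUnitalCommRing D] (φ : ZE E →ₙ+* D) : Set (ZE E) :=
  { x | ∃ (e : E) (J : Finset E), e ≠ 0 ∧ (∀ f ∈ J, f ≠ 0 ∧ f * e = f ∧ f ≠ e) ∧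
      x = elt e - join J (fun f => f) ∧
      φ (elt e) = rjoin J (fun f => φ (elt f)) }

/-- `R` is a finite cover for `e ∈ E^×`. -/
def IsCover (e : E) (R : Finset E) : Prop :=
  (∀ f ∈ R, f ≠ 0 ∧ f * e = f) ∧
  ∀ f' : E, f' ≠ 0 → f' * e = f' → ∃ f ∈ R, f' * f ≠ 0

/-- `ℛ` is a collection of finite covers for `E`. -/
def CovSystem (ℛ : E → Set (Finset E)) : Prop :=
  ∀ e : E, e ≠ 0 → ∀ R ∈ ℛ e, IsCover e R

/-- Condition (i). -/
def CondI (ℛ : E → Set (Finset E)) : Prop :=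
  ∀ d e : E, d ≠ 0 → e ≠ 0 → d * e ≠ 0 → ∀ R ∈ ℛ e,
    d * e ∈ (R.image (fun f => d * f)).erase 0 ∨ (R.image (fun f => d * f)).erase 0 ∈ ℛ (d * e)

/-- Condition (ii). -/
def CondII (ℛ : E → Set (Finset E)) : Prop :=
  ∀ e : E, e ≠ 0 → ∀ r : ℕ, 0 < r → ∀ Rs : Fin r → Finset E,
    Function.Injective Rs → (∀ i, Rs i ∈ ℛ e) → ∀ ε : Fin r → E,
    (∀ i, ε i ∈ supp (join (Rs i) (fun f => f))) → ∀ j : Fin r,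
      (if r = 1 then e else eprod (Finset.univ.erase j) ε) ≠ 0 →
      eprod Finset.univ ε * (if r = 1 then e else eprod (Finset.univ.erase j) ε)
          = eprod Finset.univ ε ∧
      eprod Finset.univ ε ≠ (if r = 1 then e else eprod (Finset.univ.erase j) ε)

/-- Condition (iii). -/
def CondIII (Γ : Type) [Group Γ] [MulAction Γ E] (ℛ : E → Set (Finset E)) : Prop :=
  ∀ (g : Γ) (e : E), e ≠ 0 →
    (fun R : Finset E => R.image (fun f => g • f)) '' (ℛ e) = ℛ (g • e)

/-- `e(𝒮) = ∏_{R ∈ 𝒮} (e - ⋁R) ∈ ℤ[E^×]`. -/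
noncomputable def eS (e : E) (S : Finset (Finset E)) : ZE E :=
  nprod S (fun R => elt e - join R (fun f => f))

/-- `E(E,ℛ) = {e(𝒮) : e ∈ E^×, 𝒮 ⊆ ℛ(e) nonempty finite} ∪ {0} ⊆ ℤ[E^×]`. -/
def EER (ℛ : E → Set (Finset E)) : Set (ZE E) :=
  {x | ∃ (e : E) (S : Finset (Finset E)), e ≠ 0 ∧ S.Nonempty ∧ ↑S ⊆ ℛ e ∧ x = eS e S} ∪ {0}

/-- `R(𝒮,R̃) = {e(𝒮 ∪ {R̃})} ∪ {f ⬝ e(𝒮) : f ∈ R̃, f ⬝ e(𝒮) ≠ 0}`. -/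
noncomputable def RSR (e : E) (S : Finset (Finset E)) (Rt : Finset E) : Finset (ZE E) :=
  insert (eS e (insert Rt S)) ((Rt.image (fun f => elt f * eS e S)).erase 0)

/-- The collection of finite covers `ℛ(E,ℛ)` on `E(E,ℛ)`, assigning to an element
`x = e(𝒮)` of `E(E,ℛ)^×` the covers `R(𝒮,R̃)`, `R̃ ∈ ℛ(e) ∖ 𝒮` (over all ways of
presenting `x` in the form `e(𝒮)`). -/
def RER (ℛ : E → Set (Finset E)) (x : ZE E) : Set (Finset (ZE E)) :=
  {C | ∃ (e : E) (S : Finset (Finset E)) (Rt : Finset E),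
        e ≠ 0 ∧ S.Nonempty ∧ ↑S ⊆ ℛ e ∧ Rt ∈ ℛ e ∧ Rt ∉ S ∧ x = eS e S ∧ C = RSR e S Rt}

/-- The `ℤ`-linear map `ℤ[E₁^×] → ℤ[E₂^×]` induced by a map `θ` from `E₁` to `ℤ[E₂^×]`,
sending a basis element `e' ∈ E₁^×` to `θ e'`. -/
noncomputable def indMap {E₁ E₂ : Type} [SemilatticeWithZero E₁] [SemilatticeWithZero E₂]
    (θ : E₁ → ZE E₂) : ZE E₁ →ₗ[ℤ] ZE E₂ :=
  (Finsupp.linearCombination ℤ θ).comp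
    ((MonoidAlgebra.coeffLinearEquiv ℤ).toLinearMap.comp ((ZS E₁).subtype.toIntLinearMap))

/-- `(E₁, ℛ₁, θ)` is a realization of the construction `(E(E,ℛ), ℛ(E,ℛ))`:
`θ` identifies the abstract Γ-semilattice `E₁` with `E(E,ℛ) ⊆ ℤ[E^×]` (equivariantly,
multiplicatively and preserving `0`), and `ℛ₁` corresponds to `ℛ(E,ℛ)` under this
identification. -/
def Realizes {Γ E E₁ : Type} [Group Γ] [SemilatticeWithZero E] [MulAction Γ E]
    [SemilatticeWithZero E₁] [MulAction Γ E₁]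
    (ℛ : E → Set (Finset E)) (ℛ₁ : E₁ → Set (Finset E₁)) (θ : E₁ → ZE E) : Prop :=
  Function.Injective θ ∧ Set.range θ = EER ℛ ∧ θ 0 = 0 ∧
  (∀ x y : E₁, θ (x * y) = θ x * θ y) ∧
  (∀ (g : Γ) (x : E₁), θ (g • x) = act g (θ x)) ∧
  (∀ e' : E₁, e' ≠ 0 → ∀ C : Finset E₁, C ∈ ℛ₁ e' ↔ C.image θ ∈ RER ℛ (θ e'))

lemma SemilatticeWithZero.eq_of_mul_eq {a b e : E} (hb : b * e = b) (h : a * b = e) : b = e := by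
  rw [← hb, ← h, mul_left_comm, SemilatticeWithZero.mul_idem]

section NonUnitalCommRing

variable {ι A : Type} [NonUnitalCommRing A]

open Unitization

lemma inr_nprod {s : Finset ι} (hs : s.Nonempty) (f : ι → A) :
    (inr (nprod s f) : Unitization ℤ A) = ∏ j ∈ s, (inr (f j) : Unitization ℤ A) := by
  have hfst : (∏ j ∈ s, (inr (f j) : Unitization ℤ A)).fst = 0 := by
    obtain ⟨a, ha⟩ := hs
    have hmap := map_prod (fstHom ℤ A).toRingHom (fun j => (inr (f j) : Unitization ℤ A)) s
    simp only [AlgHom.toRingHom_eq_coe, RingHom.coe_coe, fstHom_apply, fst_inr] at hmap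
    rw [hmap]
    exact Finset.prod_eq_zero ha rfl
  exact Unitization.ext (by rw [hfst, fst_inr]) rfl

lemma nprod_singleton (a : ι) (f : ι → A) : nprod {a} f = f a := by
  simp [nprod]

lemma nprod_cons {a : ι} {s : Finset ι} (ha : a ∉ s) (hs : s.Nonempty) (f : ι → A) :
    nprod (s.cons a ha) f = f a * nprod s f := by
  apply inr_injective (R := ℤ)
  rw [inr_nprod (Finset.cons_nonempty ha), Finset.prod_cons, inr_mul, inr_nprod hs]

lemma nprod_insert [DecidableEq ι] {a : ι} {s : Finset ι} (ha : a ∉ s) (hs : s.Nonempty)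
    (f : ι → A) : nprod (insert a s) f = f a * nprod s f := by
  rw [← Finset.cons_eq_insert a s ha, nprod_cons ha hs]

lemma nprod_eq_zero {a : ι} {s : Finset ι} (ha : a ∈ s) {f : ι → A} (hf : f a = 0) :
    nprod s f = 0 := by
  unfold nprod
  rw [Finset.prod_eq_zero (f := fun j => (inr (f j) : Unitization ℤ A)) ha (by rw [hf, inr_zero]),
    snd_zero]

lemma nprod_mem {σ : Type} [SetLike σ A] [MulMemClass σ A] (M : σ) {s : Finset ι}
    (hs : s.Nonempty) {f : ι → A} (hf : ∀ j ∈ s, f j ∈ M) : nprod s f ∈ M := by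
  induction hs using Finset.Nonempty.cons_induction with
  | singleton a => simpa [nprod_singleton] using hf a
  | cons a s ha hs ih =>
    rw [nprod_cons ha hs]
    exact mul_mem (hf a (Finset.mem_cons_self a s))
      (ih fun j hj => hf j (Finset.mem_cons_of_mem hj))

lemma rjoin_mem (S : NonUnitalSubring A) {s : Finset ι} {f : ι → A} (hf : ∀ j ∈ s, f j ∈ S) :
    rjoin s f ∈ S :=
  sum_mem fun _ ht => zsmul_mem (nprod_mem S (Finset.mem_filter.mp ht).2
    fun j hj => hf j (Finset.mem_powerset.mp (Finset.mem_filter.mp ht).1 hj)) _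

lemma inr_rjoin (s : Finset ι) (f : ι → A) :
    (inr (rjoin s f) : Unitization ℤ A) = 1 - ∏ j ∈ s, (1 - (inr (f j) : Unitization ℤ A)) := by
  classical
  set x : ι → Unitization ℤ A := fun j => inr (f j)
  have hneg : ∀ t : Finset ι, ∏ j ∈ t, -x j = (-1 : ℤ) ^ t.card • ∏ j ∈ t, x j := by
    intro t
    induction t using Finset.induction_on with
    | empty => simp
    | insert a t ha ih =>
      rw [Finset.prod_insert ha, Finset.prod_insert ha, ih, Finset.card_insert_of_notMem ha,
        pow_succ, mul_neg_one, neg_smul, neg_mul, mul_smul_comm]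
  have hexpand : ∏ j ∈ s, (1 - x j) = ∑ t ∈ s.powerset, (-1 : ℤ) ^ t.card • ∏ j ∈ t, x j := by
    simp_rw [sub_eq_add_neg]
    rw [Finset.prod_one_add (R := Unitization ℤ A) (f := fun j => -x j) s]
    exact Finset.sum_congr rfl fun t _ => hneg t
  have hnonempty : s.powerset.filter (fun t => t.Nonempty) = s.powerset.erase ∅ := by
    ext t
    simp [Finset.nonempty_iff_ne_empty, and_comm]
  have hinr := map_sum (inrHom ℤ ℤ A) (fun t => ((-1 : ℤ) ^ (t.card + 1)) • nprod t f)
    (s.powerset.erase ∅)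
  simp only [inrHom_apply] at hinr
  have hterm : ∀ t ∈ s.powerset.erase ∅,
      (inr ((-1 : ℤ) ^ (t.card + 1) • nprod t f) : Unitization ℤ A)
        = -((-1 : ℤ) ^ t.card • ∏ j ∈ t, x j) := by
    intro t ht
    rw [inr_smul, inr_nprod (Finset.nonempty_iff_ne_empty.mpr (Finset.ne_of_mem_erase ht)),
      pow_succ, mul_neg_one, neg_smul]
  rw [hexpand, rjoin, hnonempty, hinr, Finset.sum_congr rfl hterm, Finset.sum_neg_distrib,
    Finset.sum_erase_eq_sub (Finset.empty_mem_powerset s)]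
  simp

lemma rjoin_eq_of_mem {s : Finset ι} {f : ι → A} {a : ι} (ha : a ∈ s)
    (habs : ∀ j ∈ s, f a * f j = f j) : rjoin s f = f a := by
  apply inr_injective (R := ℤ)
  set u : Unitization ℤ A := inr (f a)
  have hfix : (1 - u) * ∏ j ∈ s.erase a, (1 - (inr (f j) : Unitization ℤ A)) = 1 - u :=
    Finset.prod_induction _ (fun w => (1 - u) * w = 1 - u)
      (fun v w hv hw => by rw [← mul_assoc, hv, hw]) (mul_one _)
      (fun j hj => by
        rw [mul_sub, mul_one, sub_mul, one_mul, ← inr_mul, habs j (Finset.mem_of_mem_erase hj)]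
        abel)
  rw [inr_rjoin, ← Finset.mul_prod_erase s _ ha, hfix, sub_sub_cancel]

end NonUnitalCommRing

lemma T_coeff_of_ne_zero (x : MonoidAlgebra ℤ E) {d : E} (hd : d ≠ 0) :
    (T x).coeff d = x.coeff d := by
  rw [T, MonoidAlgebra.coeff_sub, Finsupp.sub_apply, sgl_apply_ne 0 d _ hd.symm, sub_zero]

lemma mem_supp {x : ZE E} {d : E} : d ∈ supp x ↔ x.1.coeff d ≠ 0 := Finsupp.mem_support_iff

lemma ne_zero_of_mem_supp {x : ZE E} {d : E} (hd : d ∈ supp x) : d ≠ 0 := by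
  rintro rfl
  exact mem_supp.mp hd x.2

lemma coeff_add (x y : ZE E) (d : E) : (x + y).1.coeff d = x.1.coeff d + y.1.coeff d :=
  Finsupp.add_apply _ _ _

lemma coeff_neg (x : ZE E) (d : E) : (-x).1.coeff d = -x.1.coeff d :=
  Finsupp.neg_apply _ _

lemma coeff_sub (x y : ZE E) (d : E) : (x - y).1.coeff d = x.1.coeff d - y.1.coeff d :=
  Finsupp.sub_apply _ _ _

lemma coeff_elt_self {a : E} (ha : a ≠ 0) : (elt a).1.coeff a = 1 := by
  change (T (sgl a 1)).coeff a = 1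
  rw [T_coeff_of_ne_zero _ ha, sgl_apply_self]

lemma coeff_elt_of_ne {a d : E} (h : a ≠ d) : (elt a).1.coeff d = 0 := by
  by_cases hd : d = 0
  · subst hd
    exact (elt a).2
  · change (T (sgl a 1)).coeff d = 0
    rw [T_coeff_of_ne_zero _ hd, sgl_apply_ne a d 1 h]

lemma elt_mul (a b : E) : elt a * elt b = elt (a * b) := by
  apply Subtype.ext
  change T (T (sgl a 1) * T (sgl b 1)) = T (sgl (a * b) 1)
  rw [T_mul_left, T_mul_right]
  congr 1
  change MonoidAlgebra.single a (1 : ℤ) * MonoidAlgebra.single b 1 = MonoidAlgebra.single (a * b) 1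
  rw [MonoidAlgebra.single_mul_single, one_mul]

lemma exists_mul_eq_of_mem_supp_mul {x y : ZE E} {d : E} (hd : d ∈ supp (x * y)) :
    ∃ a ∈ supp x, ∃ b ∈ supp y, a * b = d := by
  have hd' : d ∈ (x.1 * y.1).coeff.support := by
    rw [Finsupp.mem_support_iff, ← T_coeff_of_ne_zero _ (ne_zero_of_mem_supp hd)]
    exact mem_supp.mp hd
  simpa [Finset.mem_mul, mem_supp] using MonoidAlgebra.support_coeff_mul_subset _ _ hd'

lemma forall_mem_supp_mul_of_forall_mem_supp {e : E} {y : ZE E}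
    (hy : ∀ d ∈ supp y, d * e = d ∧ d ≠ e) (x : ZE E) :
    ∀ d ∈ supp (x * y), d * e = d ∧ d ≠ e := by
  intro d hd
  obtain ⟨a, -, b, hb, rfl⟩ := exists_mul_eq_of_mem_supp_mul hd
  obtain ⟨hbe, hne⟩ := hy b hb
  exact ⟨by rw [mul_assoc, hbe], fun h => hne (SemilatticeWithZero.eq_of_mul_eq hbe h)⟩

def strictlyBelow (e : E) : NonUnitalSubring (ZE E) where
  carrier := {x | ∀ d ∈ supp x, d * e = d ∧ d ≠ e}
  zero_mem' := fun _ hd => absurd rfl (mem_supp.mp hd)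
  add_mem' := fun {x y} hx hy d hd => by
    by_cases hxd : x.1.coeff d = 0
    · refine hy d (mem_supp.mpr fun hyd => mem_supp.mp hd ?_)
      rw [coeff_add, hxd, hyd, add_zero]
    · exact hx d (mem_supp.mpr hxd)
  neg_mem' := fun {x} hx d hd =>
    hx d (mem_supp.mpr fun hxd => mem_supp.mp hd (by rw [coeff_neg, hxd, neg_zero]))
  mul_mem' := fun {x _} _ hy => forall_mem_supp_mul_of_forall_mem_supp hy x

lemma mul_mem_strictlyBelow (x : ZE E) {e : E} {y : ZE E} (hy : y ∈ strictlyBelow e) :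
    x * y ∈ strictlyBelow e :=
  forall_mem_supp_mul_of_forall_mem_supp hy x

lemma elt_mem_strictlyBelow {e f : E} (hfe : f * e = f) (hne : f ≠ e) :
    elt f ∈ strictlyBelow e := by
  intro d hd
  obtain rfl : d = f := by
    by_contra h
    exact mem_supp.mp hd (coeff_elt_of_ne (Ne.symm h))
  exact ⟨hfe, hne⟩

lemma join_mem_strictlyBelow {e : E} {R : Finset E} (hR : ∀ f ∈ R, f * e = f ∧ f ≠ e) :
    join R (fun f => f) ∈ strictlyBelow e :=
  rjoin_mem _ fun f hf => elt_mem_strictlyBelow (hR f hf).1 (hR f hf).2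

lemma join_eq_elt_of_mem {e : E} {R : Finset E} (hR : ∀ f ∈ R, f * e = f) (he : e ∈ R) :
    join R (fun f => f) = elt e :=
  rjoin_eq_of_mem he fun f hf => by rw [elt_mul, mul_comm, hR f hf]

def eltAddStrictlyBelow (e : E) : Subsemigroup (ZE E) where
  carrier := {x | x - elt e ∈ strictlyBelow e}
  mul_mem' := fun {x y} hx hy => by
    have hidem : elt e * elt e = elt e := by rw [elt_mul, SemilatticeWithZero.mul_idem]
    have hexpand : x * y - elt e
        = (x - elt e) * (y - elt e) + elt e * (y - elt e) + (x - elt e) * elt e := by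
      simp only [mul_sub, sub_mul, hidem]
      abel
    change x * y - elt e ∈ strictlyBelow e
    rw [hexpand, mul_comm _ (elt e)]
    exact add_mem (add_mem (mul_mem_strictlyBelow _ hy) (mul_mem_strictlyBelow _ hy))
      (mul_mem_strictlyBelow _ hx)

lemma eS_sub_elt_mem_strictlyBelow {e : E} {S : Finset (Finset E)} (hS : S.Nonempty)
    (hR : ∀ R ∈ S, ∀ f ∈ R, f * e = f ∧ f ≠ e) : eS e S - elt e ∈ strictlyBelow e :=
  nprod_mem (eltAddStrictlyBelow e) hS fun R hRS => by
    change elt e - join R (fun f => f) - elt e ∈ strictlyBelow e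
    rw [sub_sub_cancel_left]
    exact neg_mem (join_mem_strictlyBelow (hR R hRS))

lemma eS_eq_zero_of_mem {e : E} {S : Finset (Finset E)} {R : Finset E} (hRS : R ∈ S)
    (hR : ∀ f ∈ R, f * e = f) (he : e ∈ R) : eS e S = 0 :=
  nprod_eq_zero hRS (by rw [join_eq_elt_of_mem hR he, sub_self])

lemma mem_supp_of_sub_elt_mem_strictlyBelow {e : E} (he : e ≠ 0) {x : ZE E}
    (hx : x - elt e ∈ strictlyBelow e) : e ∈ supp x := by
  rw [mem_supp]
  intro hxe
  have hmem : e ∈ supp (x - elt e) := by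
    rw [mem_supp, coeff_sub, hxe, coeff_elt_self he]
    norm_num
  exact (hx e hmem).2 rfl

lemma mul_eq_of_mem_supp_of_sub_elt_mem_strictlyBelow {e : E} {x : ZE E}
    (hx : x - elt e ∈ strictlyBelow e) {d : E} (hd : d ∈ supp x) : d * e = d := by
  by_cases hde : d = e
  · rw [hde, SemilatticeWithZero.mul_idem]
  · refine (hx d (mem_supp.mpr ?_)).1
    rw [coeff_sub, coeff_elt_of_ne (Ne.symm hde), sub_zero]
    exact mem_supp.mp hd

section Stabilizer

variable {Γ : Type} [Group Γ] [MulAction Γ E]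

lemma coeff_act_smul {g : Γ} (hg : g • (0 : E) = 0) (x : ZE E) (d : E) :
    (act g x).1.coeff (g • d) = x.1.coeff d := by
  by_cases hd : d = 0
  · subst hd
    rw [hg]
    exact (act g x).2.trans x.2.symm
  · change (T _).coeff (g • d) = _
    rw [T_coeff_of_ne_zero _ (fun h => hd (MulAction.injective g (h.trans hg.symm))),
      MonoidAlgebra.coeff_ofCoeff, Finsupp.mapDomain_apply (MulAction.injective g)]

lemma smul_mem_supp_iff {g : Γ} (hg : g • (0 : E) = 0) {x : ZE E} (hx : act g x = x) {d : E} :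
    g • d ∈ supp x ↔ d ∈ supp x := by
  rw [mem_supp, mem_supp, ← coeff_act_smul hg x d, hx]

lemma smul_eq_self_of_act_eq (hΓ : IsGammaSL Γ E) {e : E} (he : e ≠ 0) {x : ZE E}
    (hx : x - elt e ∈ strictlyBelow e) {g : Γ} (hg : act g x = x) : g • e = e := by
  have hmem := mem_supp_of_sub_elt_mem_strictlyBelow he hx
  have hle : (g • e) * e = g • e :=
    mul_eq_of_mem_supp_of_sub_elt_mem_strictlyBelow hx ((smul_mem_supp_iff (hΓ.2 g) hg).2 hmem)
  have hle' : (g⁻¹ • e) * e = g⁻¹ • e :=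
    mul_eq_of_mem_supp_of_sub_elt_mem_strictlyBelow hx
      ((smul_mem_supp_iff (hΓ.2 g) hg).1 (by rwa [smul_inv_smul]))
  have hge : e * (g • e) = e := by
    simpa only [hΓ.1, smul_inv_smul] using congrArg (g • ·) hle'
  calc g • e = (g • e) * e := hle.symm
    _ = e * (g • e) := mul_comm _ _
    _ = e := hge

end Stabilizer

def CoversBelow (ℛ : E → Set (Finset E)) : Prop :=
  ∀ e : E, e ≠ 0 → ∀ R ∈ ℛ e, ∀ f ∈ R, f * e = f

lemma CovSystem.coversBelow {ℛ : E → Set (Finset E)} (h : CovSystem ℛ) : CoversBelow ℛ :=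
  fun e he R hR f hf => ((h e he R hR).1 f hf).2

section Realizes

variable {Γ E₁ : Type} [Group Γ] [MulAction Γ E] [SemilatticeWithZero E₁] [MulAction Γ E₁]
  {ℛ : E → Set (Finset E)} {ℛ₁ : E₁ → Set (Finset E₁)} {θ : E₁ → ZE E}

lemma Realizes.coversBelow (hreal : Realizes (Γ := Γ) ℛ ℛ₁ θ) : CoversBelow ℛ₁ := by
  obtain ⟨hinj, -, -, hmul, -, hcov⟩ := hreal
  intro e' he' C hC x hx
  obtain ⟨e, S, Rt, -, hS, -, -, hRtS, he'S, hC⟩ := (hcov e' he' C).mp hC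
  have hidem : eS e S * eS e S = eS e S := by
    rw [← he'S, ← hmul, SemilatticeWithZero.mul_idem]
  obtain ⟨y, hy⟩ : ∃ y, θ x = y * eS e S := by
    have hθx : θ x ∈ RSR e S Rt := hC ▸ Finset.mem_image_of_mem θ hx
    rcases Finset.mem_insert.mp hθx with h | h
    · exact ⟨_, h.trans (nprod_insert hRtS hS _)⟩
    · obtain ⟨f, -, hf⟩ := Finset.mem_image.mp (Finset.mem_of_mem_erase h)
      exact ⟨elt f, hf.symm⟩
  apply hinj
  rw [hmul, he'S, hy, mul_assoc, hidem]

lemma Realizes.exists_smul_eq_self (hreal : Realizes (Γ := Γ) ℛ ℛ₁ θ) (hΓ : IsGammaSL Γ E)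
    (hbelow : CoversBelow ℛ) {e' : E₁} (he' : e' ≠ 0) {g : Γ} (hg : g • e' = e') :
    ∃ e : E, e ≠ 0 ∧ g • e = e := by
  obtain ⟨hinj, hrange, hzero, -, hequiv, -⟩ := hreal
  have hθ : θ e' ≠ 0 := fun h => he' (hinj (h.trans hzero.symm))
  obtain ⟨e, S, he, hS, hSR, hx⟩ | hx0 := hrange ▸ Set.mem_range_self e'
  · have heR : ∀ R ∈ S, e ∉ R := fun R hR heR =>
      hθ (hx.trans (eS_eq_zero_of_mem hR (hbelow e he R (hSR hR)) heR))
    refine ⟨e, he, smul_eq_self_of_act_eq hΓ he (x := θ e') ?_ (by rw [← hequiv, hg])⟩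
    rw [hx]
    exact eS_sub_elt_mem_strictlyBelow hS fun R hR f hf =>
      ⟨hbelow e he R (hSR hR) f hf, fun hfe => heR R hR (hfe ▸ hf)⟩
  · exact absurd hx0 hθ

end Realizes

end IndRes

open IndRes

theorem statement_16_general {Γ : Type} [Group Γ]
    (Ek : ℕ → Type) (i1 : ∀ k, SemilatticeWithZero (Ek k)) (i2 : ∀ k, MulAction Γ (Ek k))
    (hact : ∀ k, IsGammaSL Γ (Ek k))
    (ℛk : ∀ k, Ek k → Set (Finset (Ek k)))
    (hcov : CovSystem (ℛk 0))
    (θ : ∀ k, Ek (k + 1) → ZE (Ek k))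
    (hreal : ∀ k, Realizes (Γ := Γ) (ℛk k) (ℛk (k + 1)) (θ k)) :
    (∀ (k : ℕ) (e' : Ek k), e' ≠ 0 → ∀ g : Γ, g • e' = e' →
      g ∈ Subgroup.closure {g : Γ | ∃ e : Ek 0, e ≠ 0 ∧ g • e = e}) ∧
    ((∀ (g : Γ) (e : Ek 0), e ≠ 0 → g • e = e → g = 1) →
      ∀ (k : ℕ) (g : Γ) (e' : Ek k), e' ≠ 0 → g • e' = e' → g = 1) := by
  have hbelow : ∀ k, CoversBelow (ℛk k)
    | 0 => hcov.coversBelow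
    | k + 1 => (hreal k).coversBelow
  have hfix : ∀ k (e' : Ek k), e' ≠ 0 → ∀ g : Γ, g • e' = e' → ∃ e : Ek 0, e ≠ 0 ∧ g • e = e := by
    intro k
    induction k with
    | zero => exact fun e' he' g hg => ⟨e', he', hg⟩
    | succ k ih =>
      intro e' he' g hg
      obtain ⟨e, he, hge⟩ := (hreal k).exists_smul_eq_self (hact k) (hbelow k) he' hg
      exact ih e he g hge
  refine ⟨fun k e' he' g hg => ?_, fun hfree k g e' he' hg => ?_⟩
  · obtain ⟨e, he, hge⟩ := hfix k e' he' g hg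
    exact Subgroup.subset_closure ⟨e, he, hge⟩
  · obtain ⟨e, he, hge⟩ := hfix k e' he' g hg
    exact hfree g e he hge

theorem statement_16 {Γ : Type} [Group Γ]
    (Ek : ℕ → Type) (i1 : ∀ k, SemilatticeWithZero (Ek k)) (i2 : ∀ k, MulAction Γ (Ek k))
    (hact : ∀ k, IsGammaSL Γ (Ek k))
    (ℛk : ∀ k, Ek k → Set (Finset (Ek k)))
    (hcov : CovSystem (ℛk 0)) (h1 : CondI (ℛk 0)) (h2 : CondII (ℛk 0)) (h3 : CondIII Γ (ℛk 0))
    (θ : ∀ k, Ek (k + 1) → ZE (Ek k))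
    (hreal : ∀ k, Realizes (Γ := Γ) (ℛk k) (ℛk (k + 1)) (θ k)) :
    (∀ (k : ℕ) (e' : Ek k), e' ≠ 0 → ∀ g : Γ, g • e' = e' →
      g ∈ Subgroup.closure {g : Γ | ∃ e : Ek 0, e ≠ 0 ∧ g • e = e}) ∧
    ((∀ (g : Γ) (e : Ek 0), e ≠ 0 → g • e = e → g = 1) →
      ∀ (k : ℕ) (g : Γ) (e' : Ek k), e' ≠ 0 → g • e' = e' → g = 1) :=
  statement_16_general Ek i1 i2 hact ℛk hcov θ hreal
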